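/- For nonnegative integers b and n with n/6 ≤ b < n/4, the graph S_{b,n} has exactly b²(n-4b) triangles. -/

import Mathlib

open Finset SimpleGraph

/-- Adjacency of the 3-prism graph: two triangles `{(s,0),(s,1),(s,2)}` for `s : Fin 2`,
with a perfect matching between vertices with the same second coordinate. -/
def prismAdj (p q : Fin 2 × Fin 3) : Prop :=
  (p.1 = q.1 ∧ p.2 ≠ q.2) ∨ (p.1 ≠ q.1 ∧ p.2 = q.2)

/-- The sizes of the six parts of `S_{b,n}`: four parts of size `b` and two parts of
size `⌊(n-4b)/2⌋` and `⌈(n-4b)/2⌉`. -/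
def prismPartSize (b n : ℕ) (p : Fin 2 × Fin 3) : ℕ :=
  if p.2 = 2 then (if p.1 = 0 then (n - 4 * b) / 2 else (n - 4 * b) - (n - 4 * b) / 2) else b

/-- The graph `S_{b,n}`, the blow-up of the 3-prism graph. -/
def SGraph (b n : ℕ) : SimpleGraph (Σ p : Fin 2 × Fin 3, Fin (prismPartSize b n p)) where
  Adj x y := prismAdj x.1 y.1
  symm := by
    constructor
    rintro x y (⟨h1, h2⟩ | ⟨h1, h2⟩)
    · exact Or.inl ⟨h1.symm, fun h => h2 h.symm⟩
    · exact Or.inr ⟨fun h => h1 h.symm, h2.symm⟩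
  loopless := by
    constructor
    rintro x (⟨_, h⟩ | ⟨h, _⟩) <;> exact h rfl

instance (b n : ℕ) : DecidableRel (SGraph b n).Adj := fun x y =>
  decidable_of_iff ((x.1.1 = y.1.1 ∧ x.1.2 ≠ y.1.2) ∨ (x.1.1 ≠ y.1.1 ∧ x.1.2 = y.1.2)) Iff.rfl

/-!
`S_{b,n}` is the blow-up of the triangular prism in which each vertex `p` becomes an independent
set of size `prismPartSize b n p`, i.e. the pullback of the prism along `Sigma.fst`. A triangle of
a blow-up meets three distinct parts spanning a triangle of the base graph, and the triangles over
a fixed base triangle are obtained by choosing one vertex in each of its parts. The only triangles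
of the prism are its two ends `U₁U₂U₃` and `V₁V₂V₃`, contributing `b²|U₃|` and `b²|V₃|`.
-/

namespace Finset

variable {V W : Type*} [DecidableEq W]

lemma card_filter_sigma_fst_eq {β : W → Type*} [Fintype W] [∀ w, Fintype (β w)] (w : W) :
    #{x : Σ w, β w | x.1 = w} = Fintype.card (β w) := by
  rw [← card_univ, ← card_map (Function.Embedding.sigmaMk w)]
  congr 1
  ext ⟨w', y⟩
  simp only [mem_filter, mem_univ, true_and, mem_map, Function.Embedding.sigmaMk_apply]
  constructor
  · rintro rfl; exact ⟨y, rfl⟩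
  · rintro ⟨y, h⟩; cases h; rfl

lemma card_filter_image_eq_and_card_eq [Fintype V] [DecidableEq V] (f : V → W) (t : Finset W) :
    #{s : Finset V | s.image f = t ∧ #s = #t} = ∏ w ∈ t, #{v | f v = w} := by
  rw [← card_pi, eq_comm]
  refine card_bij (fun g _ ↦ t.attach.image fun w ↦ g w.1 w.2) ?_ ?_ ?_
  · intro g hg
    simp only [mem_pi, mem_filter, mem_univ, true_and] at hg
    have hinj : Function.Injective fun w : t ↦ g w.1 w.2 := fun w w' h ↦
      Subtype.ext <| (hg w w.2).symm.trans <| (congrArg f h).trans (hg w' w'.2)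
    simp only [mem_filter, mem_univ, true_and, card_image_of_injective _ hinj, card_attach,
      and_true, image_image]
    ext w
    simp [Function.comp_def, hg]
  · intro g hg g' hg' h
    simp only [mem_pi, mem_filter, mem_univ, true_and] at hg hg'
    funext w hw
    obtain ⟨⟨w', hw'⟩, -, he⟩ := mem_image.mp (h ▸ mem_image_of_mem _ (mem_attach t ⟨w, hw⟩))
    obtain rfl : w' = w := by simpa [hg, hg'] using congrArg f he
    exact he.symm
  · intro s hs
    simp only [mem_filter, mem_univ, true_and] at hs
    obtain ⟨rfl, hcard⟩ := hs
    have hinj : Set.InjOn f s := card_image_iff.mp hcard.symm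
    choose g hgs hgf using fun w (hw : w ∈ s.image f) ↦ mem_image.mp hw
    refine ⟨g, by simpa [mem_pi] using hgf, ?_⟩
    ext v
    rw [mem_image]
    constructor
    · rintro ⟨⟨w, hw⟩, -, rfl⟩; exact hgs w hw
    · intro hv
      exact ⟨⟨f v, mem_image_of_mem f hv⟩, mem_attach _ _, hinj (hgs _ _) hv (hgf _ _)⟩

end Finset

namespace SimpleGraph

variable {V W : Type*} [DecidableEq W] {G : SimpleGraph W} {f : V → W}

lemma isNClique_comap_iff {k : ℕ} {s : Finset V} :
    (G.comap f).IsNClique k s ↔ G.IsNClique k (s.image f) ∧ #s = k := by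
  simp only [isNClique_iff, isClique_iff, coe_image, Set.Pairwise, comap_adj]
  constructor
  · rintro ⟨hs, rfl⟩
    have hinj : Set.InjOn f s := fun x hx y hy hxy ↦ by
      by_contra hne; exact (hs hx hy hne).ne hxy
    refine ⟨⟨?_, card_image_iff.mpr hinj⟩, rfl⟩
    rintro _ ⟨x, hx, rfl⟩ _ ⟨y, hy, rfl⟩ hne
    exact hs hx hy (ne_of_apply_ne f hne)
  · rintro ⟨⟨hs, hcard⟩, rfl⟩
    refine ⟨fun x hx y hy hne ↦ hs ⟨x, hx, rfl⟩ ⟨y, hy, rfl⟩ ?_, rfl⟩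
    exact fun h ↦ hne (card_image_iff.mp hcard hx hy h)

lemma card_cliqueFinset_comap [Fintype V] [DecidableEq V] [Fintype W] [DecidableRel G.Adj]
    (f : V → W) (k : ℕ) :
    #((G.comap f).cliqueFinset k) = ∑ t ∈ G.cliqueFinset k, ∏ w ∈ t, #{v | f v = w} := by
  rw [card_eq_sum_card_fiberwise (f := fun s ↦ s.image f) fun s hs ↦
    mem_cliqueFinset_iff.mpr (isNClique_comap_iff.mp (mem_cliqueFinset_iff.mp hs)).1]
  refine sum_congr rfl fun t ht ↦ ?_
  rw [← card_filter_image_eq_and_card_eq]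
  congr 1
  ext s
  have hk := (mem_cliqueFinset_iff.mp ht).2
  simp only [mem_filter, mem_cliqueFinset_iff, mem_univ, true_and, isNClique_comap_iff]
  constructor
  · rintro ⟨⟨-, hs⟩, rfl⟩; exact ⟨rfl, hs.trans hk.symm⟩
  · rintro ⟨rfl, hs⟩; exact ⟨⟨mem_cliqueFinset_iff.mp ht, hs.trans hk⟩, rfl⟩

end SimpleGraph

instance : DecidableRel prismAdj := fun p q ↦
  decidable_of_iff ((p.1 = q.1 ∧ p.2 ≠ q.2) ∨ (p.1 ≠ q.1 ∧ p.2 = q.2)) Iff.rfl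

def prismGraph : SimpleGraph (Fin 2 × Fin 3) where
  Adj := prismAdj
  symm := ⟨by decide⟩
  loopless := ⟨by decide⟩

instance : DecidableRel prismGraph.Adj := inferInstanceAs (DecidableRel prismAdj)

lemma prismGraph_cliqueFinset_three :
    prismGraph.cliqueFinset 3 = {{(0, 0), (0, 1), (0, 2)}, {(1, 0), (1, 1), (1, 2)}} := by
  decide

theorem SGraph_triangle_card_general (b n : ℕ) :
    ((SGraph b n).cliqueFinset 3).card = b ^ 2 * (n - 4 * b) := by
  -- `SGraph b n` is `prismGraph.comap Sigma.fst` by definition, decidability instance included.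
  refine (card_cliqueFinset_comap (G := prismGraph) Sigma.fst 3).trans ?_
  rw [prismGraph_cliqueFinset_three, sum_pair (by decide), prod_insert (by decide),
    prod_pair (by decide), prod_insert (by decide), prod_pair (by decide)]
  simp only [card_filter_sigma_fst_eq, Fintype.card_fin]
  show b * (b * ((n - 4 * b) / 2)) + b * (b * (n - 4 * b - (n - 4 * b) / 2)) = _
  rw [← Nat.mul_add, ← Nat.mul_add, Nat.add_sub_of_le (Nat.div_le_self _ 2), ← Nat.mul_assoc, sq]

/-- For nonnegative integers `b` and `n` with `n/6 ≤ b < n/4`, the graph `S_{b,n}` has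
exactly `b²(n - 4b)` triangles. -/
theorem SGraph_triangle_card (b n : ℕ) (h1 : (n : ℝ) / 6 ≤ b) (h2 : (b : ℝ) < n / 4) :
    ((SGraph b n).cliqueFinset 3).card = b ^ 2 * (n - 4 * b) :=
  SGraph_triangle_card_general b n
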